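/- Let m ≥ 1 be an integer and let S : ℝ^p → ℝ be measurable, nonnegative and Lebesgue integrable with ∫_{ℝ^p} ‖ω‖^m S(ω) dω < ∞, and define k : ℝ^p → ℂ by k(r) = ∫_{ℝ^p} exp(i⟨ω,r⟩) S(ω) dω. Then for all multi-indices a, b ∈ ℕ^p with |a| + |b| ≤ m, the mixed iterated partial derivative with respect to x and x' of the function (x, x') ↦ k(x − x') satisfies ∂_x^a ∂_{x'}^b k(x − x') = (−1)^{|b|} (∂^{a+b} k)(x − x') for all x, x' ∈ ℝ^p. -/

import Mathlib

open MeasureTheory Complex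

/-- Partial derivative of `f` along the `j`-th coordinate direction. -/
noncomputable def coordDeriv {p : ℕ} {F : Type*} [NormedAddCommGroup F] [NormedSpace ℝ F]
    (j : Fin p) (f : EuclideanSpace ℝ (Fin p) → F) : EuclideanSpace ℝ (Fin p) → F :=
  fun x => deriv (fun t : ℝ => f (x + t • EuclideanSpace.single j (1 : ℝ))) 0

/-- Iterated coordinate partial derivative `∂^{a_1}_{r_1} ⋯ ∂^{a_p}_{r_p} f`
for a multi-index `a : Fin p → ℕ`. -/
noncomputable def multiDeriv {p : ℕ} {F : Type*} [NormedAddCommGroup F] [NormedSpace ℝ F]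
    (a : Fin p → ℕ) (f : EuclideanSpace ℝ (Fin p) → F) : EuclideanSpace ℝ (Fin p) → F :=
  (List.finRange p).foldr (fun j g => (coordDeriv j)^[a j] g) f

namespace StmtAux

variable {p : ℕ}

/-! ### Algebraic (unconditional) lemmas -/

lemma coordDeriv_const_mul (j : Fin p) (c : ℂ) (f : EuclideanSpace ℝ (Fin p) → ℂ) :
    coordDeriv j (fun x => c * f x) = fun x => c * coordDeriv j f x := by
  funext x
  simp only [coordDeriv]
  exact deriv_const_mul_field c

lemma iter_const_mul (j : Fin p) (n : ℕ) (c : ℂ) (f : EuclideanSpace ℝ (Fin p) → ℂ) :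
    (coordDeriv j)^[n] (fun x => c * f x) = fun x => c * (coordDeriv j)^[n] f x := by
  induction n generalizing f with
  | zero => rfl
  | succ n ih =>
    rw [Function.iterate_succ_apply, Function.iterate_succ_apply, coordDeriv_const_mul,
      ih (coordDeriv j f)]

lemma foldr_const_mul (l : List (Fin p)) (a : Fin p → ℕ) (c : ℂ)
    (f : EuclideanSpace ℝ (Fin p) → ℂ) :
    l.foldr (fun j g => (coordDeriv j)^[a j] g) (fun x => c * f x)
      = fun x => c * l.foldr (fun j g => (coordDeriv j)^[a j] g) f x := by
  induction l with
  | nil => rfl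
  | cons j l ih =>
    simp only [List.foldr_cons]
    rw [ih, iter_const_mul]

lemma coordDeriv_comp_sub (j : Fin p) (f : EuclideanSpace ℝ (Fin p) → ℂ)
    (v : EuclideanSpace ℝ (Fin p)) :
    coordDeriv j (fun y => f (y - v)) = fun x => coordDeriv j f (x - v) := by
  funext x
  simp only [coordDeriv]
  congr 1
  funext t
  congr 1
  abel

lemma iter_comp_sub (j : Fin p) (n : ℕ) (f : EuclideanSpace ℝ (Fin p) → ℂ)
    (v : EuclideanSpace ℝ (Fin p)) :
    (coordDeriv j)^[n] (fun y => f (y - v)) = fun x => (coordDeriv j)^[n] f (x - v) := by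
  induction n generalizing f with
  | zero => rfl
  | succ n ih =>
    rw [Function.iterate_succ_apply, Function.iterate_succ_apply, coordDeriv_comp_sub,
      ih (coordDeriv j f)]

lemma foldr_comp_sub (l : List (Fin p)) (a : Fin p → ℕ) (f : EuclideanSpace ℝ (Fin p) → ℂ)
    (v : EuclideanSpace ℝ (Fin p)) :
    l.foldr (fun j g => (coordDeriv j)^[a j] g) (fun y => f (y - v))
      = fun x => l.foldr (fun j g => (coordDeriv j)^[a j] g) f (x - v) := by
  induction l with
  | nil => rfl
  | cons j l ih =>
    simp only [List.foldr_cons]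
    rw [ih, iter_comp_sub]

lemma coordDeriv_comp_sub' (j : Fin p) (f : EuclideanSpace ℝ (Fin p) → ℂ)
    (y : EuclideanSpace ℝ (Fin p)) :
    coordDeriv j (fun y' => f (y - y')) = fun x' => -coordDeriv j f (y - x') := by
  funext x'
  simp only [coordDeriv]
  have h : (fun t : ℝ => f (y - (x' + t • EuclideanSpace.single j (1 : ℝ))))
      = fun t : ℝ => f ((y - x') + (-t) • EuclideanSpace.single j (1 : ℝ)) := by
    funext t
    congr 1
    rw [neg_smul]
    abel
  rw [h]
  have := deriv_comp_neg (f := fun s : ℝ => f ((y - x') + s • EuclideanSpace.single j (1 : ℝ)))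
    (x := (0 : ℝ))
  simpa using this

lemma iter_comp_sub' (j : Fin p) (n : ℕ) (f : EuclideanSpace ℝ (Fin p) → ℂ)
    (y : EuclideanSpace ℝ (Fin p)) :
    (coordDeriv j)^[n] (fun y' => f (y - y'))
      = fun x' => (-1 : ℂ) ^ n * (coordDeriv j)^[n] f (y - x') := by
  induction n generalizing f with
  | zero => simp
  | succ n ih =>
    rw [Function.iterate_succ_apply', ih, coordDeriv_const_mul, coordDeriv_comp_sub']
    funext x'
    rw [Function.iterate_succ_apply']
    ring

lemma foldr_comp_sub' (l : List (Fin p)) (a : Fin p → ℕ) (f : EuclideanSpace ℝ (Fin p) → ℂ)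
    (y : EuclideanSpace ℝ (Fin p)) :
    l.foldr (fun j g => (coordDeriv j)^[a j] g) (fun y' => f (y - y'))
      = fun x' => (-1 : ℂ) ^ ((l.map a).sum)
          * l.foldr (fun j g => (coordDeriv j)^[a j] g) f (y - x') := by
  induction l with
  | nil => simp
  | cons j l ih =>
    simp only [List.foldr_cons]
    rw [ih, iter_const_mul, iter_comp_sub']
    funext x'
    simp only [List.map_cons, List.sum_cons, pow_add]
    ring

/-- The Fourier-type integral with polynomial weight given by multi-index `c`. -/
noncomputable def KK (S : EuclideanSpace ℝ (Fin p) → ℝ) (c : Fin p → ℕ) :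
    EuclideanSpace ℝ (Fin p) → ℂ :=
  fun r => ∫ ω, (∏ i, (Complex.I * ((ω i : ℝ) : ℂ)) ^ c i)
      * Complex.exp (Complex.I * ((inner ℝ ω r : ℝ) : ℂ)) * (S ω : ℂ)

lemma prod_pow_single_add (z : Fin p → ℂ) (c : Fin p → ℕ) (j : Fin p) :
    (∏ i, z i ^ ((c + (Pi.single j 1 : Fin p → ℕ)) i)) = (∏ i, z i ^ c i) * z j := by
  simp only [Pi.add_apply, pow_add]
  rw [Finset.prod_mul_distrib]
  congr 1
  rw [Fintype.prod_eq_single j (fun i hi => by simp [Pi.single_eq_of_ne hi])]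
  simp

lemma inner_add_smul_single (ω x : EuclideanSpace ℝ (Fin p)) (j : Fin p) (t : ℝ) :
    (inner ℝ ω (x + t • EuclideanSpace.single j (1 : ℝ)) : ℝ) = (inner ℝ ω x : ℝ) + t * ω j := by
  rw [inner_add_right, real_inner_smul_right]
  simp [EuclideanSpace.inner_single_right]

variable {m : ℕ} {S : EuclideanSpace ℝ (Fin p) → ℝ}

lemma integrable_pow_mul (hSmeas : Measurable S) (hSnonneg : ∀ ω, 0 ≤ S ω)
    (hSint : Integrable S) (hmom : Integrable (fun ω => ‖ω‖ ^ m * S ω))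
    {n : ℕ} (hn : n ≤ m) :
    Integrable (fun ω : EuclideanSpace ℝ (Fin p) => ‖ω‖ ^ n * S ω) := by
  refine (hSint.add hmom).mono' ?_ ?_
  · exact ((measurable_norm.pow_const n).mul hSmeas).aestronglyMeasurable
  · refine Filter.Eventually.of_forall fun ω => ?_
    have h2 : 0 ≤ S ω := hSnonneg ω
    have h1 : ‖ω‖ ^ n ≤ 1 + ‖ω‖ ^ m := by
      rcases le_total ‖ω‖ 1 with h | h
      · have := pow_le_one₀ (norm_nonneg ω) h (n := n)
        nlinarith [pow_nonneg (norm_nonneg ω) m]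
      · have := pow_le_pow_right₀ h hn
        nlinarith
    have h3 : ‖ω‖ ^ n * S ω ≤ (1 + ‖ω‖ ^ m) * S ω := by
      apply mul_le_mul_of_nonneg_right h1 h2
    calc ‖‖ω‖ ^ n * S ω‖ = ‖ω‖ ^ n * S ω := by
          rw [Real.norm_of_nonneg (by positivity)]
      _ ≤ (1 + ‖ω‖ ^ m) * S ω := h3
      _ = (fun ω => S ω + ‖ω‖ ^ m * S ω) ω := by ring
      _ = (S + fun ω => ‖ω‖ ^ m * S ω) ω := rfl

lemma aesm_integrand (hSmeas : Measurable S) (c : Fin p → ℕ)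
    {g : EuclideanSpace ℝ (Fin p) → ℝ} (hg : Measurable g) :
    AEStronglyMeasurable (fun ω : EuclideanSpace ℝ (Fin p) =>
      (∏ i, (Complex.I * ((ω i : ℝ) : ℂ)) ^ c i)
        * Complex.exp (Complex.I * ((g ω : ℝ) : ℂ)) * (S ω : ℂ)) volume := by
  apply Measurable.aestronglyMeasurable
  refine Measurable.mul (Measurable.mul ?_ ?_) ?_
  · exact Finset.measurable_prod _ fun i _ =>
      (measurable_const.mul (Complex.measurable_ofReal.comp ((measurable_pi_apply i).comp (WithLp.measurable_ofLp 2 _)))).pow_const _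
  · exact Complex.measurable_exp.comp
      (measurable_const.mul (Complex.measurable_ofReal.comp hg))
  · exact Complex.measurable_ofReal.comp hSmeas

lemma norm_integrand_le (hSnonneg : ∀ ω, 0 ≤ S ω) (c : Fin p → ℕ) (t : ℝ)
    (ω : EuclideanSpace ℝ (Fin p)) :
    ‖(∏ i, (Complex.I * ((ω i : ℝ) : ℂ)) ^ c i)
        * Complex.exp (Complex.I * (t : ℂ)) * (S ω : ℂ)‖
      ≤ ‖ω‖ ^ (∑ i, c i) * S ω := by
  rw [norm_mul, norm_mul]
  have hexp : ‖Complex.exp (Complex.I * (t : ℂ))‖ = 1 := by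
    simp [Complex.norm_exp]
  have hS : ‖(S ω : ℂ)‖ = S ω := by
    rw [Complex.norm_real, Real.norm_of_nonneg (hSnonneg ω)]
  rw [hexp, hS, mul_one]
  refine mul_le_mul_of_nonneg_right ?_ (hSnonneg ω)
  have h1 : ‖∏ i, (Complex.I * ((ω i : ℝ) : ℂ)) ^ c i‖ = ∏ i, |ω i| ^ c i := by
    rw [norm_prod]
    refine Finset.prod_congr rfl fun i _ => ?_
    rw [norm_pow]
    congr 1
    simp
  rw [h1, ← Finset.prod_pow_eq_pow_sum]
  refine Finset.prod_le_prod (fun i _ => by positivity) fun i _ => ?_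
  refine pow_le_pow_left₀ (abs_nonneg _) ?_ _
  have := abs_real_inner_le_norm ω (EuclideanSpace.single i (1 : ℝ))
  simpa [EuclideanSpace.inner_single_right] using this

lemma integrable_integrand (hSmeas : Measurable S) (hSnonneg : ∀ ω, 0 ≤ S ω)
    (hSint : Integrable S) (hmom : Integrable (fun ω => ‖ω‖ ^ m * S ω))
    (c : Fin p → ℕ) (hc : (∑ i, c i) ≤ m)
    {g : EuclideanSpace ℝ (Fin p) → ℝ} (hg : Measurable g) :
    Integrable (fun ω : EuclideanSpace ℝ (Fin p) =>
      (∏ i, (Complex.I * ((ω i : ℝ) : ℂ)) ^ c i)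
        * Complex.exp (Complex.I * ((g ω : ℝ) : ℂ)) * (S ω : ℂ)) := by
  refine (integrable_pow_mul hSmeas hSnonneg hSint hmom hc).mono'
    (aesm_integrand hSmeas c hg) ?_
  exact Filter.Eventually.of_forall fun ω => norm_integrand_le hSnonneg c (g ω) ω


lemma coordDeriv_KK (hSmeas : Measurable S) (hSnonneg : ∀ ω, 0 ≤ S ω)
    (hSint : Integrable S) (hmom : Integrable (fun ω => ‖ω‖ ^ m * S ω))
    (c : Fin p → ℕ) (hc : (∑ i, c i) + 1 ≤ m) (j : Fin p) :
    coordDeriv j (KK S c) = KK S (c + Pi.single j 1) := by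
  classical
  funext x
  set c' : Fin p → ℕ := c + Pi.single j 1 with hc'
  have hsumc' : (∑ i, c' i) = (∑ i, c i) + 1 := by
    simp [hc', Finset.sum_add_distrib, Fintype.sum_pi_single']
  -- the parametric families
  set F : ℝ → EuclideanSpace ℝ (Fin p) → ℂ := fun t ω =>
    (∏ i, (Complex.I * ((ω i : ℝ) : ℂ)) ^ c i)
      * Complex.exp (Complex.I * (((inner ℝ ω x : ℝ) + t * ω j : ℝ) : ℂ)) * (S ω : ℂ) with hF
  set F' : ℝ → EuclideanSpace ℝ (Fin p) → ℂ := fun t ω =>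
    (∏ i, (Complex.I * ((ω i : ℝ) : ℂ)) ^ c' i)
      * Complex.exp (Complex.I * (((inner ℝ ω x : ℝ) + t * ω j : ℝ) : ℂ)) * (S ω : ℂ) with hF'
  have hgmeas : ∀ t : ℝ, Measurable fun ω : EuclideanSpace ℝ (Fin p) =>
      (inner ℝ ω x : ℝ) + t * ω j := fun t =>
    (continuous_id.inner continuous_const).measurable.add
      (measurable_const.mul ((measurable_pi_apply j).comp (WithLp.measurable_ofLp 2 _)))
  have key := hasDerivAt_integral_of_dominated_loc_of_deriv_le (μ := volume)
    (F := F) (F' := F') (x₀ := (0 : ℝ))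
    (bound := fun ω => ‖ω‖ ^ ((∑ i, c i) + 1) * S ω) (Metric.ball_mem_nhds (0 : ℝ) one_pos)
    (Filter.Eventually.of_forall fun t => aesm_integrand hSmeas c (hgmeas t))
    (integrable_integrand hSmeas hSnonneg hSint hmom c (by omega) (hgmeas 0))
    (aesm_integrand hSmeas c' (hgmeas 0))
    (Filter.Eventually.of_forall fun ω t _ => by
      calc ‖F' t ω‖ ≤ ‖ω‖ ^ (∑ i, c' i) * S ω := by
            rw [hF']; exact norm_integrand_le hSnonneg c' _ ω
        _ = ‖ω‖ ^ ((∑ i, c i) + 1) * S ω := by rw [hsumc'])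
    (integrable_pow_mul hSmeas hSnonneg hSint hmom (le_of_eq_of_le rfl hc))
    (Filter.Eventually.of_forall fun ω t _ => by
      -- derivative in t of F t ω
      have h0 : HasDerivAt (fun t : ℝ => (t : ℂ)) 1 t := by
        simpa using (hasDerivAt_id t).ofReal_comp
      have h1 : HasDerivAt (fun t : ℝ =>
          Complex.I * (((inner ℝ ω x : ℝ) : ℂ) + (t : ℂ) * ((ω j : ℝ) : ℂ)))
          (Complex.I * ((ω j : ℝ) : ℂ)) t := by
        simpa using (((h0.mul_const (((ω j : ℝ) : ℂ))).const_add
          (((inner ℝ ω x : ℝ) : ℂ))).const_mul Complex.I)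
      have h2 := ((h1.cexp.const_mul
        (∏ i, (Complex.I * ((ω i : ℝ) : ℂ)) ^ c i)).mul_const ((S ω : ℂ)))
      have hfun : (fun t : ℝ => F t ω) = fun t : ℝ =>
          (∏ i, (Complex.I * ((ω i : ℝ) : ℂ)) ^ c i)
            * Complex.exp (Complex.I * (((inner ℝ ω x : ℝ) : ℂ) + (t : ℂ) * ((ω j : ℝ) : ℂ)))
            * (S ω : ℂ) := by
        funext s
        rw [hF]
        push_cast
        ring_nf
      rw [hfun]
      convert h2 using 1
      · rfl
      simp only [hF', hc']
      rw [prod_pow_single_add]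
      push_cast
      ring)
  -- now identify the derivative
  have hKeq : (fun t : ℝ => KK S c (x + t • EuclideanSpace.single j (1 : ℝ)))
      = fun t => ∫ ω, F t ω := by
    funext t
    rw [KK]
    congr 1
    funext ω
    simp only [hF]
    rw [inner_add_smul_single]
  have hderiv : deriv (fun t : ℝ => KK S c (x + t • EuclideanSpace.single j (1 : ℝ))) 0
      = ∫ ω, F' 0 ω := by
    rw [hKeq]
    exact key.2.deriv
  simp only [coordDeriv]
  rw [hderiv]
  simp only [KK]
  congr 1
  funext ω
  simp only [hF']
  norm_num

lemma iter_KK (hSmeas : Measurable S) (hSnonneg : ∀ ω, 0 ≤ S ω)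
    (hSint : Integrable S) (hmom : Integrable (fun ω => ‖ω‖ ^ m * S ω)) (j : Fin p) :
    ∀ (n : ℕ) (c : Fin p → ℕ), (∑ i, c i) + n ≤ m →
      (coordDeriv j)^[n] (KK S c) = KK S (c + Pi.single j n) := by
  intro n
  induction n with
  | zero => intro c hc; simp
  | succ n ih =>
    intro c hc
    rw [Function.iterate_succ_apply', ih c (by omega),
      coordDeriv_KK hSmeas hSnonneg hSint hmom _
        (by simp [Finset.sum_add_distrib, Fintype.sum_pi_single']; omega) j]
    have hidx : c + Pi.single j n + (Pi.single j 1 : Fin p → ℕ) = c + Pi.single j (n + 1) := by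
      funext i
      by_cases h : i = j <;> simp [Pi.single_apply, h, add_assoc]
    rw [hidx]

lemma sum_listIdx (c : Fin p → ℕ) (l : List (Fin p)) :
    (∑ i, ((l.map fun j => (Pi.single j (c j) : Fin p → ℕ)).sum) i) = (l.map c).sum := by
  induction l with
  | nil => simp
  | cons j l ih =>
    simp [List.map_cons, List.sum_cons, Finset.sum_add_distrib, ih,
      Fintype.sum_pi_single']

lemma foldr_KK (hSmeas : Measurable S) (hSnonneg : ∀ ω, 0 ≤ S ω)
    (hSint : Integrable S) (hmom : Integrable (fun ω => ‖ω‖ ^ m * S ω)) (c : Fin p → ℕ) :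
    ∀ (l : List (Fin p)) (d : Fin p → ℕ),
      (∑ i, d i) + (l.map c).sum ≤ m →
      l.foldr (fun j g => (coordDeriv j)^[c j] g) (KK S d)
        = KK S (d + (l.map fun j => (Pi.single j (c j) : Fin p → ℕ)).sum) := by
  intro l
  induction l with
  | nil => intro d hd; simp
  | cons j l ih =>
    intro d hd
    simp only [List.foldr_cons]
    have hd' : (∑ i, d i) + (l.map c).sum ≤ m := by
      simp only [List.map_cons, List.sum_cons] at hd; omega
    rw [ih d hd', iter_KK hSmeas hSnonneg hSint hmom j (c j) _ (by
      simp only [Pi.add_apply, Finset.sum_add_distrib, sum_listIdx]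
      simp only [List.map_cons, List.sum_cons] at hd
      omega)]
    simp only [List.map_cons, List.sum_cons]
    have hidx2 : d + (List.map (fun j => (Pi.single j (c j) : Fin p → ℕ)) l).sum
          + (Pi.single j (c j) : Fin p → ℕ)
        = d + ((Pi.single j (c j) : Fin p → ℕ)
          + (List.map (fun j => (Pi.single j (c j) : Fin p → ℕ)) l).sum) := by
      abel
    rw [hidx2]

lemma multiDeriv_const_mul (a : Fin p → ℕ) (c : ℂ) (f : EuclideanSpace ℝ (Fin p) → ℂ) :
    multiDeriv a (fun x => c * f x) = fun x => c * multiDeriv a f x :=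
  foldr_const_mul (List.finRange p) a c f

lemma multiDeriv_comp_sub (a : Fin p → ℕ) (f : EuclideanSpace ℝ (Fin p) → ℂ)
    (v : EuclideanSpace ℝ (Fin p)) :
    multiDeriv a (fun y => f (y - v)) = fun x => multiDeriv a f (x - v) :=
  foldr_comp_sub (List.finRange p) a f v

lemma multiDeriv_comp_sub' (a : Fin p → ℕ) (f : EuclideanSpace ℝ (Fin p) → ℂ)
    (y : EuclideanSpace ℝ (Fin p)) :
    multiDeriv a (fun y' => f (y - y'))
      = fun x' => (-1 : ℂ) ^ (∑ j, a j) * multiDeriv a f (y - x') := by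
  rw [Fin.sum_univ_def a]
  exact foldr_comp_sub' (List.finRange p) a f y

lemma multiDeriv_KK (hSmeas : Measurable S) (hSnonneg : ∀ ω, 0 ≤ S ω)
    (hSint : Integrable S) (hmom : Integrable (fun ω => ‖ω‖ ^ m * S ω))
    (c d : Fin p → ℕ) (h : (∑ i, d i) + (∑ i, c i) ≤ m) :
    multiDeriv c (KK S d) = KK S (d + c) := by
  have hidx : ((List.finRange p).map fun j => (Pi.single j (c j) : Fin p → ℕ)).sum = c := by
    rw [← Fin.sum_univ_def]
    funext i
    rw [Finset.sum_apply]
    exact Fintype.sum_pi_single i c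
  have hsum : ((List.finRange p).map c).sum = ∑ i, c i := (Fin.sum_univ_def c).symm
  rw [multiDeriv, foldr_KK hSmeas hSnonneg hSint hmom c (List.finRange p) d
    (by rw [hsum]; exact h), hidx]


end StmtAux

theorem stmt_1 {p m : ℕ} (hm : 1 ≤ m)
    (S : EuclideanSpace ℝ (Fin p) → ℝ)
    (hSmeas : Measurable S) (hSnonneg : ∀ ω, 0 ≤ S ω) (hSint : Integrable S)
    (hmom : Integrable (fun ω => ‖ω‖ ^ m * S ω))
    (k : EuclideanSpace ℝ (Fin p) → ℂ)
    (hk : ∀ r, k r = ∫ ω, Complex.exp (Complex.I * ((inner ℝ ω r : ℝ) : ℂ)) * (S ω : ℂ))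
    (a b : Fin p → ℕ) (hab : (∑ j, a j) + (∑ j, b j) ≤ m) :
    ∀ x x' : EuclideanSpace ℝ (Fin p),
      multiDeriv a (fun y => multiDeriv b (fun y' => k (y - y')) x') x =
        (-1 : ℂ) ^ (∑ j, b j) * multiDeriv (a + b) k (x - x') := by
  intro x x'
  have hbm : (∑ j, b j) ≤ m := le_trans (Nat.le_add_left _ _) hab
  have hkK : k = StmtAux.KK S 0 := by
    funext r
    rw [hk, StmtAux.KK]
    congr 1
    funext ω
    simp
  have h1 : (fun y => multiDeriv b (fun y' => k (y - y')) x')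
      = fun y => (-1 : ℂ) ^ (∑ j, b j) * multiDeriv b k (y - x') := by
    funext y
    rw [StmtAux.multiDeriv_comp_sub' b k y]
  have e1 : multiDeriv b k = StmtAux.KK S b := by
    rw [hkK, StmtAux.multiDeriv_KK hSmeas hSnonneg hSint hmom b 0 (by simpa using hbm),
      zero_add]
  have e2 : multiDeriv a (StmtAux.KK S b) = StmtAux.KK S (b + a) :=
    StmtAux.multiDeriv_KK hSmeas hSnonneg hSint hmom a b (by omega)
  have e3 : multiDeriv (a + b) k = StmtAux.KK S (a + b) := by
    rw [hkK, StmtAux.multiDeriv_KK hSmeas hSnonneg hSint hmom (a + b) 0 (by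
      simp only [Pi.add_apply, Finset.sum_add_distrib]
      simpa using hab), zero_add]
  calc multiDeriv a (fun y => multiDeriv b (fun y' => k (y - y')) x') x
      = (-1 : ℂ) ^ (∑ j, b j) * multiDeriv a (fun y => multiDeriv b k (y - x')) x := by
        rw [h1, StmtAux.multiDeriv_const_mul]
    _ = (-1 : ℂ) ^ (∑ j, b j) * multiDeriv a (multiDeriv b k) (x - x') := by
        rw [StmtAux.multiDeriv_comp_sub]
    _ = (-1 : ℂ) ^ (∑ j, b j) * multiDeriv (a + b) k (x - x') := by
        rw [e1, e2, e3, add_comm b a]
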